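/- arXiv:math/0304186 — 13 statements merged into one kernel-verified Lean document; each statement's English description precedes it below -/
import Mathlib

section
/- Let π : B₃ → SL(2,ℤ) be the surjective homomorphism with π(𝔞) = u₁₂ and π(𝔟) = u₂₁. Then the kernel of π is the subgroup of B₃ generated by 𝔠², where 𝔠 = (𝔞𝔟𝔞)² is the generator of the center of B₃. -/
/-- The braid relation `aba = bab` on two generators (indexed by `Bool`,
with `true ↦ 𝔞` and `false ↦ 𝔟`). -/
def braidRels : Set (FreeGroup Bool) :=
  {FreeGroup.of true * FreeGroup.of false * FreeGroup.of true *
    (FreeGroup.of false * FreeGroup.of true * FreeGroup.of false)⁻¹}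

/-- The braid group on three strands, presented by generators `𝔞, 𝔟` with the
single relation `𝔞𝔟𝔞 = 𝔟𝔞𝔟`. -/
abbrev B3 : Type := PresentedGroup braidRels

/-- The generator `𝔞` of `B₃`. -/
def brA : B3 := PresentedGroup.of true

/-- The generator `𝔟` of `B₃`. -/
def brB : B3 := PresentedGroup.of false

/-- The generator `𝔠 = (𝔞𝔟𝔞)²` of the center of `B₃`. -/
def brC : B3 := (brA * brB * brA) ^ 2

/-- The matrix `u₁₂ = [[1,1],[0,1]]` in `SL(2,ℤ)`. -/
def u12 : Matrix.SpecialLinearGroup (Fin 2) ℤ :=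
  ⟨!![1, 1; 0, 1], by norm_num [Matrix.det_fin_two_of]⟩

/-- The matrix `u₂₁ = [[1,0],[-1,1]]` in `SL(2,ℤ)`. -/
def u21 : Matrix.SpecialLinearGroup (Fin 2) ℤ :=
  ⟨!![1, 0; -1, 1], by norm_num [Matrix.det_fin_two_of]⟩

/-!
Modulo the central element `𝔠 = (𝔞𝔟𝔞)² = (𝔞𝔟)³`, the braid group `B₃` is the free product
`ℤ/2 ∗ ℤ/3 = ⟨x⟩ ∗ ⟨y⟩`: the map `𝔞 ↦ y⁻¹x`, `𝔟 ↦ xy⁻¹` has the inverse `x ↦ 𝔞𝔟𝔞`, `y ↦ 𝔞𝔟`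
modulo `⟨𝔠⟩`. Since `π 𝔠 = -1` acts trivially on the upper half-plane, the action of `B₃` on `ℍ`
through `π` factors through `ℤ/2 ∗ ℤ/3`, and this factorisation is injective by ping-pong on the
half-planes `re z < 0` and `re z > 0`: `π(𝔞𝔟𝔞)` acts as `z ↦ -1/z`, which swaps them, and `π(𝔞𝔟)`
acts as `z ↦ 1/(1-z)`, which with its square maps the left one into the right one.
Hence `ker π ⊆ ⟨𝔠⟩`, and as `π 𝔠` has order 2, `ker π = ⟨𝔠²⟩`.
-/

open UpperHalfPlane
open scoped MatrixGroups Pointwise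

theorem Subgroup.normal_of_le_center {G : Type*} [Group G] {H : Subgroup G}
    (h : H ≤ Subgroup.center G) : H.Normal where
  conj_mem n hn g := by
    rwa [Subgroup.mem_center_iff.mp (h hn) g, mul_inv_cancel_right]

def zmodPowHom {G : Type*} [Group G] (n : ℕ) [NeZero n] (g : G) (hg : g ^ n = 1) :
    Multiplicative (ZMod n) →* G where
  toFun x := g ^ x.toAdd.val
  map_one' := by simp
  map_mul' x y := by
    rw [toAdd_mul, ZMod.val_add, ← pow_eq_pow_mod _ hg, pow_add]

theorem zmodPowHom_ofAdd_one {G : Type*} [Group G] (n : ℕ) [Fact (1 < n)] (g : G)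
    (hg : g ^ n = 1) : zmodPowHom n g hg (Multiplicative.ofAdd 1) = g := by
  simp [zmodPowHom, ZMod.val_one]

theorem exists_zmodPowHom_eq_pow {G : Type*} [Group G] (n : ℕ) [NeZero n] (g : G)
    (hg : g ^ n = 1) {x : Multiplicative (ZMod n)} (hx : x ≠ 1) :
    ∃ k, 0 < k ∧ k < n ∧ zmodPowHom n g hg x = g ^ k :=
  ⟨x.toAdd.val, ZMod.val_pos.mpr hx, ZMod.val_lt _, rfl⟩

abbrev Z2Z3 : Type := Monoid.CoprodI fun i : Bool => Multiplicative (ZMod (cond i 2 3))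

namespace Z2Z3

def x : Z2Z3 := Monoid.CoprodI.of (i := true) (Multiplicative.ofAdd 1)

def y : Z2Z3 := Monoid.CoprodI.of (i := false) (Multiplicative.ofAdd 1)

theorem x_sq : x ^ 2 = 1 := by
  rw [x, ← map_pow]; exact (map_eq_one_iff _ (Monoid.CoprodI.of_injective _)).mpr rfl

theorem y_pow_three : y ^ 3 = 1 := by
  rw [y, ← map_pow]; exact (map_eq_one_iff _ (Monoid.CoprodI.of_injective _)).mpr rfl

variable {G : Type*} [Group G] {σ τ : G}

def lift (hσ : σ ^ 2 = 1) (hτ : τ ^ 3 = 1) : Z2Z3 →* G :=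
  Monoid.CoprodI.lift fun
    | true => zmodPowHom 2 σ hσ
    | false => zmodPowHom 3 τ hτ

variable (hσ : σ ^ 2 = 1) (hτ : τ ^ 3 = 1)

@[simp] theorem lift_x : lift hσ hτ x = σ := by
  rw [lift, x, Monoid.CoprodI.lift_of]
  exact zmodPowHom_ofAdd_one 2 σ hσ

@[simp] theorem lift_y : lift hσ hτ y = τ := by
  rw [lift, y, Monoid.CoprodI.lift_of]
  exact zmodPowHom_ofAdd_one 3 τ hτ

theorem lift_injective_of_ping_pong {α : Type*} [MulAction G α] (X Y : Set α)
    (hX : X.Nonempty) (hY : Y.Nonempty) (hXY : Disjoint X Y)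
    (hσY : σ • Y ⊆ X) (hτX : τ • X ⊆ Y) (hτ2X : τ ^ 2 • X ⊆ Y) :
    Function.Injective (lift hσ hτ) := by
  refine Monoid.CoprodI.lift_injective_of_ping_pong _ (.inr ⟨false, ?_⟩) (fun i => cond i X Y)
    (by rintro (_ | _) <;> assumption) ?_ ?_
  · simp [Cardinal.mk_fintype]
  · rintro (_ | _) (_ | _) h <;> first | exact absurd rfl h | exact hXY | exact hXY.symm
  · rintro (_ | _) (_ | _) hij h h1 <;> try exact absurd rfl hij
    · change zmodPowHom 3 τ hτ h • X ⊆ Y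
      obtain ⟨k, hk0, hk3, hk⟩ := exists_zmodPowHom_eq_pow 3 τ hτ h1
      rw [hk]
      interval_cases k
      · simpa using hτX
      · exact hτ2X
    · change zmodPowHom 2 σ hσ h • Y ⊆ X
      obtain ⟨k, hk0, hk2, hk⟩ := exists_zmodPowHom_eq_pow 2 σ hσ h1
      obtain rfl : k = 1 := by omega
      simpa [hk] using hσY

end Z2Z3

namespace B3

theorem brA_mul_brB_mul_brA : brA * brB * brA = brB * brA * brB := by
  have h := PresentedGroup.one_of_mem (Set.mem_singleton _ : _ ∈ braidRels)
  simp only [map_mul, map_inv, mul_inv_eq_one] at h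
  exact h

theorem brC_eq_brA_mul_brB_pow_three : brC = (brA * brB) ^ 3 := by
  rw [brC, sq]
  nth_rewrite 2 [brA_mul_brB_mul_brA]
  simp only [pow_succ, pow_zero, one_mul, mul_assoc]

theorem brC_mem_center : brC ∈ Subgroup.center B3 := by
  have hA : brA * brB * brA * brA = brB * (brA * brB * brA) := by
    nth_rewrite 1 [brA_mul_brB_mul_brA]; group
  have hB : brA * brB * brA * brB = brA * (brA * brB * brA) := by
    nth_rewrite 2 [brA_mul_brB_mul_brA]; group
  have hc : ∀ i, Commute brC (PresentedGroup.of i) := by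
    rintro (_ | _)
    · exact SemiconjBy.mul_left (b := brA * brB * brA) hA hB
    · exact SemiconjBy.mul_left (b := brA * brB * brA) hB hA
  refine Subgroup.mem_center_iff.mpr fun g => .symm ?_
  refine (PresentedGroup.generated_by braidRels (Subgroup.centralizer {brC}) ?_ g) brC rfl
  exact fun i => Subgroup.mem_centralizer_singleton_iff.mpr (hc i).symm

open Z2Z3 in
theorem toZ2Z3_rels :
    ∀ r ∈ braidRels, FreeGroup.lift (fun i => cond i (y⁻¹ * x) (x * y⁻¹)) r = 1 := by
  rintro _ rfl
  simp only [map_mul, map_inv, FreeGroup.lift_apply_of, cond_true, cond_false, mul_inv_eq_one]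
  have hx : x * x = 1 := by rw [← sq, x_sq]
  calc y⁻¹ * x * (x * y⁻¹) * (y⁻¹ * x) = y⁻¹ * (x * x) * y * (y ^ 3)⁻¹ * x := by group
    _ = x * y * (y ^ 3)⁻¹ * (x * x) * y⁻¹ := by rw [hx, y_pow_three]; group
    _ = x * y⁻¹ * (y⁻¹ * x) * (x * y⁻¹) := by group

def toZ2Z3 : B3 →* Z2Z3 := PresentedGroup.toGroup toZ2Z3_rels

theorem toZ2Z3_brA : toZ2Z3 brA = Z2Z3.y⁻¹ * Z2Z3.x := PresentedGroup.toGroup.of toZ2Z3_rels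

theorem toZ2Z3_brB : toZ2Z3 brB = Z2Z3.x * Z2Z3.y⁻¹ := PresentedGroup.toGroup.of toZ2Z3_rels

variable {G : Type*} [Group G] (f : B3 →* G) (hf : f brC = 1)

def liftZ2Z3 : Z2Z3 →* G :=
  Z2Z3.lift (σ := f (brA * brB * brA)) (τ := f (brA * brB)) (by rw [← map_pow]; exact hf)
    (by rw [← map_pow, ← brC_eq_brA_mul_brB_pow_three, hf])

theorem liftZ2Z3_comp_toZ2Z3 : (liftZ2Z3 f hf).comp toZ2Z3 = f := by
  refine PresentedGroup.ext fun i => ?_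
  cases i
  · change liftZ2Z3 f hf (toZ2Z3 brB) = f brB
    rw [toZ2Z3_brB, map_mul, map_inv, liftZ2Z3, Z2Z3.lift_x, Z2Z3.lift_y, ← map_inv, ← map_mul]
    congr 1
    rw [brA_mul_brB_mul_brA]; group
  · change liftZ2Z3 f hf (toZ2Z3 brA) = f brA
    rw [toZ2Z3_brA, map_mul, map_inv, liftZ2Z3, Z2Z3.lift_x, Z2Z3.lift_y, ← map_inv, ← map_mul]
    group

theorem ker_toZ2Z3_le : toZ2Z3.ker ≤ Subgroup.zpowers brC := by
  have : (Subgroup.zpowers brC).Normal :=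
    Subgroup.normal_of_le_center (Subgroup.zpowers_le.mpr brC_mem_center)
  intro g hg
  have hc : QuotientGroup.mk' (Subgroup.zpowers brC) brC = 1 :=
    (QuotientGroup.eq_one_iff _).mpr (Subgroup.mem_zpowers brC)
  rw [← QuotientGroup.eq_one_iff, ← QuotientGroup.mk'_apply, ← liftZ2Z3_comp_toZ2Z3 _ hc,
    MonoidHom.comp_apply, hg, map_one]

end B3

theorem UpperHalfPlane.re_specialLinearGroup_smul {R : Type*} [CommRing R] [Algebra R ℝ]
    (g : SL(2, R)) (z : ℍ) :
    (g • z).re =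
      (algebraMap R ℝ (g 0 0) * algebraMap R ℝ (g 1 0) * Complex.normSq z +
        (algebraMap R ℝ (g 0 0) * algebraMap R ℝ (g 1 1) +
          algebraMap R ℝ (g 0 1) * algebraMap R ℝ (g 1 0)) * z.re +
        algebraMap R ℝ (g 0 1) * algebraMap R ℝ (g 1 1)) /
      Complex.normSq ((algebraMap R ℝ (g 1 0) : ℂ) * z + (algebraMap R ℝ (g 1 1) : ℂ)) := by
  rw [UpperHalfPlane.re, coe_specialLinearGroup_apply, Complex.div_re, ← add_div]
  congr 1
  simp only [Complex.add_re, Complex.mul_re, Complex.ofReal_re, coe_re, Complex.ofReal_im, coe_im,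
    zero_mul, sub_zero, Complex.add_im, Complex.mul_im, add_zero, Complex.normSq_apply]
  ring

theorem ModularGroup.toPerm_neg_one : MulAction.toPerm (-1 : SL(2, ℤ)) = (1 : Equiv.Perm ℍ) :=
  Equiv.ext fun z => by simp

theorem coe_u12 : (u12 : Matrix (Fin 2) (Fin 2) ℤ) = !![1, 1; 0, 1] := rfl

theorem coe_u21 : (u21 : Matrix (Fin 2) (Fin 2) ℤ) = !![1, 0; -1, 1] := rfl

theorem u12_mul_u21_mul_u12_sq : (u12 * u21 * u12) ^ 2 = -1 := by
  ext i j; fin_cases i <;> fin_cases j <;> simp [coe_u12, coe_u21, sq]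

theorem re_u12_mul_u21_mul_u12_smul_neg {z : ℍ} (hz : 0 < z.re) :
    ((u12 * u21 * u12) • z).re < 0 := by
  have h : ((u12 * u21 * u12) • z).re = -z.re / Complex.normSq z := by
    rw [re_specialLinearGroup_smul]
    simp [coe_u12, coe_u21]
  rw [h]
  exact div_neg_of_neg_of_pos (neg_neg_of_pos hz) (normSq_pos z)

theorem re_u12_mul_u21_smul_pos {z : ℍ} (hz : z.re < 0) : 0 < ((u12 * u21) • z).re := by
  have h : ((u12 * u21) • z).re = (1 - z.re) / Complex.normSq (1 - z) := by
    rw [re_specialLinearGroup_smul]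
    simp [coe_u12, coe_u21, sub_eq_neg_add]
  have hz1 : (1 - z : ℂ) ≠ 0 := fun h => z.im_ne_zero (by simpa using congrArg Complex.im h)
  rw [h]
  exact div_pos (by linarith) (Complex.normSq_pos.mpr hz1)

theorem re_u12_mul_u21_sq_smul_pos {z : ℍ} (hz : z.re < 0) : 0 < ((u12 * u21) ^ 2 • z).re := by
  have h : ((u12 * u21) ^ 2 • z).re = (Complex.normSq z - z.re) / Complex.normSq z := by
    rw [re_specialLinearGroup_smul]
    simp [coe_u12, coe_u21, sq, sub_eq_add_neg]
  rw [h]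
  exact div_pos (by linarith [normSq_pos z]) (normSq_pos z)

theorem ker_le_ker_toZ2Z3 (π : B3 →* SL(2, ℤ)) (ha : π brA = u12) (hb : π brB = u21) :
    π.ker ≤ B3.toZ2Z3.ker := by
  set ρ := (MulAction.toPermHom SL(2, ℤ) ℍ).comp π
  have hs : ρ (brA * brB * brA) = MulAction.toPermHom SL(2, ℤ) ℍ (u12 * u21 * u12) := by
    rw [MonoidHom.comp_apply, map_mul π, map_mul π, ha, hb]
  have ht : ρ (brA * brB) = MulAction.toPermHom SL(2, ℤ) ℍ (u12 * u21) := by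
    rw [MonoidHom.comp_apply, map_mul π, ha, hb]
  have hρ : ρ brC = 1 := by
    simp [ρ, brC, ha, hb, u12_mul_u21_mul_u12_sq, ModularGroup.toPerm_neg_one]
  have hinj : Function.Injective (B3.liftZ2Z3 ρ hρ) := by
    refine Z2Z3.lift_injective_of_ping_pong _ _ {z : ℍ | z.re < 0} {z : ℍ | 0 < z.re}
      ⟨⟨⟨-1, 1⟩, one_pos⟩, (neg_one_lt_zero : (-1 : ℝ) < 0)⟩
      ⟨⟨⟨1, 1⟩, one_pos⟩, (one_pos : (0 : ℝ) < 1)⟩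
      (Set.disjoint_left.mpr fun z (h₁ : z.re < 0) (h₂ : 0 < z.re) => lt_asymm h₁ h₂) ?_ ?_ ?_
    · rw [hs]; exact Set.smul_set_subset_iff.mpr fun z hz => re_u12_mul_u21_mul_u12_smul_neg hz
    · rw [ht]; exact Set.smul_set_subset_iff.mpr fun z hz => re_u12_mul_u21_smul_pos hz
    · rw [ht, ← map_pow]
      exact Set.smul_set_subset_iff.mpr fun z hz => re_u12_mul_u21_sq_smul_pos hz
  intro g hg
  apply hinj
  rw [map_one, ← MonoidHom.comp_apply, B3.liftZ2Z3_comp_toZ2Z3, MonoidHom.comp_apply, hg, map_one]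

/-- The kernel of the homomorphism `π : B₃ → SL(2,ℤ)` determined by
`π(𝔞) = u₁₂`, `π(𝔟) = u₂₁` is the subgroup of `B₃` generated by `𝔠²`,
where `𝔠 = (𝔞𝔟𝔞)²`. -/
theorem ker_hom_B3_to_SL2Z (π : B3 →* Matrix.SpecialLinearGroup (Fin 2) ℤ)
    (ha : π brA = u12) (hb : π brB = u21) :
    π.ker = Subgroup.closure {brC ^ 2} := by
  have hπC : π brC = -1 := by rw [brC, map_pow, map_mul, map_mul, ha, hb, u12_mul_u21_mul_u12_sq]
  have hord : orderOf (π brC) = 2 := by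
    refine hπC ▸ orderOf_eq_prime neg_one_sq fun h => ?_
    simpa using congrArg (fun A : SL(2, ℤ) => A 0 0) h
  refine le_antisymm (fun g hg => ?_) ?_
  · obtain ⟨k, rfl⟩ := B3.ker_toZ2Z3_le (ker_le_ker_toZ2Z3 π ha hb hg)
    have hk : (orderOf (π brC) : ℤ) ∣ k := orderOf_dvd_iff_zpow_eq_one.mpr (by rwa [← map_zpow])
    obtain ⟨m, rfl⟩ : (2 : ℤ) ∣ k := by exact_mod_cast hord ▸ hk
    exact Subgroup.mem_closure_singleton.mpr ⟨m, by rw [← zpow_natCast, ← _root_.zpow_mul]; rfl⟩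
  · rw [Subgroup.closure_le, Set.singleton_subset_iff, SetLike.mem_coe, MonoidHom.mem_ker,
      map_pow, hπC, neg_one_sq]
end

section
/- Let G be a group and let p, q, x ∈ G satisfy the single lace Coxeter (braid) relations p x p = x p x and q x q = x q x. Then the following are equivalent: (i) qp satisfies the double lace Coxeter relation with x, i.e. (qp) x (qp) x = x (qp) x (qp); (ii) p⁻¹qp satisfies the single lace Coxeter relation with x, i.e. (p⁻¹qp) x (p⁻¹qp) = x (p⁻¹qp) x. -/
/-- If `p` and `q` each satisfy the single lace Coxeter (braid) relation with `x`,
then `qp` satisfies the double lace Coxeter relation with `x` if and only if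
`p⁻¹qp` satisfies the single lace Coxeter relation with `x`. -/
theorem double_lace_iff_conj_single_lace {G : Type*} [Group G] (p q x : G)
    (hp : p * x * p = x * p * x) (hq : q * x * q = x * q * x) :
    (q * p) * x * (q * p) * x = x * (q * p) * x * (q * p) ↔
      (p⁻¹ * q * p) * x * (p⁻¹ * q * p) = x * (p⁻¹ * q * p) * x := by
  have hC : p * x * p⁻¹ = x⁻¹ * p * x := by
    have h1 : x * ((p * x * p⁻¹) * p) = x * ((x⁻¹ * p * x) * p) := by
      calc x * ((p * x * p⁻¹) * p) = x * p * x := by group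
      _ = p * x * p := hp.symm
      _ = x * ((x⁻¹ * p * x) * p) := by group
    exact mul_right_cancel (mul_left_cancel h1)
  have hD : x * q * x⁻¹ = q⁻¹ * x * q := by
    have h1 : q * ((x * q * x⁻¹) * x) = q * ((q⁻¹ * x * q) * x) := by
      calc q * ((x * q * x⁻¹) * x) = q * x * q := by group
      _ = x * q * x := hq
      _ = q * ((q⁻¹ * x * q) * x) := by group
    exact mul_right_cancel (mul_left_cancel h1)
  constructor
  · intro h
    have T : q * (x⁻¹ * p * x) * (q * p) = x⁻¹ * p * x * (q * p) * x := by
      refine mul_left_cancel (a := x) ?_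
      calc x * (q * (x⁻¹ * p * x) * (q * p))
          = (x * q * x⁻¹) * (p * x * (q * p)) := by group
        _ = (q⁻¹ * x * q) * (p * x * (q * p)) := by rw [hD]
        _ = q⁻¹ * (x * (q * p) * x * (q * p)) := by group
        _ = q⁻¹ * ((q * p) * x * (q * p) * x) := by rw [← h]
        _ = x * (x⁻¹ * p * x * (q * p) * x) := by group
    refine mul_left_cancel (a := p) ?_
    calc p * ((p⁻¹ * q * p) * x * (p⁻¹ * q * p))
        = q * (p * x * p⁻¹) * (q * p) := by group
      _ = q * (x⁻¹ * p * x) * (q * p) := by rw [hC]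
      _ = x⁻¹ * p * x * (q * p) * x := T
      _ = p * x * p⁻¹ * (q * p) * x := by rw [hC]
      _ = p * (x * (p⁻¹ * q * p) * x) := by group
  · intro h
    have T : q * (x⁻¹ * p * x) * (q * p) = x⁻¹ * p * x * (q * p) * x := by
      calc q * (x⁻¹ * p * x) * (q * p)
          = q * (p * x * p⁻¹) * (q * p) := by rw [hC]
        _ = p * ((p⁻¹ * q * p) * x * (p⁻¹ * q * p)) := by group
        _ = p * (x * (p⁻¹ * q * p) * x) := by rw [h]
        _ = p * x * p⁻¹ * (q * p) * x := by group
        _ = x⁻¹ * p * x * (q * p) * x := by rw [hC]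
    calc (q * p) * x * (q * p) * x
        = q * (x * (x⁻¹ * p * x * (q * p) * x)) := by group
      _ = q * (x * (q * (x⁻¹ * p * x) * (q * p))) := by rw [← T]
      _ = q * ((x * q * x⁻¹) * (p * x * (q * p))) := by group
      _ = q * ((q⁻¹ * x * q) * (p * x * (q * p))) := by rw [hD]
      _ = x * (q * p) * x * (q * p) := by group
end

section
/- Let G be a group and let p, q, x ∈ G satisfy p x p = x p x and q x q = x q x. Assume moreover that qp satisfies the double lace Coxeter relation with x, i.e. (qp) x (qp) x = x (qp) x (qp) (equivalently, that p⁻¹qp satisfies the single lace Coxeter relation with x). Then the element (qp)⁻¹ p (qp) satisfies the single lace Coxeter relation with x: ((qp)⁻¹p(qp)) x ((qp)⁻¹p(qp)) = x ((qp)⁻¹p(qp)) x. -/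
/-- If `p` and `q` each satisfy the single lace Coxeter relation with `x` and
`qp` satisfies the double lace Coxeter relation with `x`, then `(qp)⁻¹p(qp)`
satisfies the single lace Coxeter relation with `x`. -/
theorem conj_single_lace_of_double_lace {G : Type*} [Group G] (p q x : G)
    (hp : p * x * p = x * p * x) (hq : q * x * q = x * q * x)
    (hqp : (q * p) * x * (q * p) * x = x * (q * p) * x * (q * p)) :
    ((q * p)⁻¹ * p * (q * p)) * x * ((q * p)⁻¹ * p * (q * p)) =
      x * ((q * p)⁻¹ * p * (q * p)) * x := by
  have hqp' : q * p * x * q * p * x = x * q * p * x * q * p := by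
    calc q * p * x * q * p * x = q * p * x * (q * p) * x := by group
      _ = x * (q * p) * x * (q * p) := hqp
      _ = x * q * p * x * q * p := by group
  calc ((q * p)⁻¹ * p * (q * p)) * x * ((q * p)⁻¹ * p * (q * p)) = p⁻¹ * q⁻¹ * p * q * p * x * p⁻¹ * q⁻¹ * p * q * p := by group
    _ = p⁻¹ * q⁻¹ * p * x⁻¹ * p⁻¹ * q⁻¹ * (q * p * x * q * p * x) * (p⁻¹ * q⁻¹ * p * q * p) := by group
    _ = p⁻¹ * q⁻¹ * p * x⁻¹ * p⁻¹ * q⁻¹ * (x * q * p * x * q * p) * (p⁻¹ * q⁻¹ * p * q * p) := by rw [hqp']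
    _ = p⁻¹ * q⁻¹ * p * x⁻¹ * p⁻¹ * q⁻¹ * x * q * p * x * p * q * p := by group
    _ = p⁻¹ * q⁻¹ * p * x⁻¹ * p⁻¹ * q⁻¹ * (x * q * x) * (x⁻¹ * p * x * p * q * p) := by group
    _ = p⁻¹ * q⁻¹ * p * x⁻¹ * p⁻¹ * q⁻¹ * (q * x * q) * (x⁻¹ * p * x * p * q * p) := by rw [← hq]
    _ = p⁻¹ * q⁻¹ * p * x⁻¹ * p⁻¹ * x * q * x⁻¹ * p * x * p * q * p := by group
    _ = p⁻¹ * q⁻¹ * x⁻¹ * p⁻¹ * (p * x * p) * (x⁻¹ * p⁻¹ * x * q * x⁻¹ * p * x * p * q * p) := by group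
    _ = p⁻¹ * q⁻¹ * x⁻¹ * p⁻¹ * (x * p * x) * (x⁻¹ * p⁻¹ * x * q * x⁻¹ * p * x * p * q * p) := by rw [hp]
    _ = p⁻¹ * q⁻¹ * x⁻¹ * p⁻¹ * x * x * q * x⁻¹ * p * x * p * q * p := by group
    _ = p⁻¹ * q⁻¹ * x⁻¹ * p⁻¹ * x * x * q * x⁻¹ * (p * x * p) * (q * p) := by group
    _ = p⁻¹ * q⁻¹ * x⁻¹ * p⁻¹ * x * x * q * x⁻¹ * (x * p * x) * (q * p) := by rw [hp]
    _ = p⁻¹ * q⁻¹ * x⁻¹ * p⁻¹ * x * x * q * p * x * q * p := by group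
    _ = p⁻¹ * q⁻¹ * x⁻¹ * p⁻¹ * q⁻¹ * (q * x * q) * (q⁻¹ * x * q * p * x * q * p) := by group
    _ = p⁻¹ * q⁻¹ * x⁻¹ * p⁻¹ * q⁻¹ * (x * q * x) * (q⁻¹ * x * q * p * x * q * p) := by rw [hq]
    _ = p⁻¹ * q⁻¹ * x⁻¹ * p⁻¹ * q⁻¹ * x * q * x * q⁻¹ * x * q * p * x * q * p := by group
    _ = p⁻¹ * q⁻¹ * x⁻¹ * p⁻¹ * q⁻¹ * x * q * x * q⁻¹ * (x * q * p * x * q * p) * ((1:G)) := by group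
    _ = p⁻¹ * q⁻¹ * x⁻¹ * p⁻¹ * q⁻¹ * x * q * x * q⁻¹ * (q * p * x * q * p * x) * ((1:G)) := by rw [← hqp']
    _ = p⁻¹ * q⁻¹ * x⁻¹ * p⁻¹ * q⁻¹ * x * q * x * p * x * q * p * x := by group
    _ = p⁻¹ * q⁻¹ * x⁻¹ * p⁻¹ * q⁻¹ * x * q * (x * p * x) * (q * p * x) := by group
    _ = p⁻¹ * q⁻¹ * x⁻¹ * p⁻¹ * q⁻¹ * x * q * (p * x * p) * (q * p * x) := by rw [← hp]
    _ = p⁻¹ * q⁻¹ * x⁻¹ * p⁻¹ * q⁻¹ * x * q * p * x * p * q * p * x := by group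
    _ = p⁻¹ * q⁻¹ * x⁻¹ * p⁻¹ * q⁻¹ * (x * q * p * x * q * p) * (p⁻¹ * q⁻¹ * p * q * p * x) := by group
    _ = p⁻¹ * q⁻¹ * x⁻¹ * p⁻¹ * q⁻¹ * (q * p * x * q * p * x) * (p⁻¹ * q⁻¹ * p * q * p * x) := by rw [← hqp']
    _ = x * p⁻¹ * q⁻¹ * p * q * p * x := by group
    _ = x * ((q * p)⁻¹ * p * (q * p)) * x := by group
end

section
/- Let G be a group and let a, b, c, x ∈ G be such that each of the five elements a, b, c, aba⁻¹ and c⁻¹bc satisfies the single lace Coxeter relation with x (i.e. g x g = x g x for each such element g). Then the elements b⁻¹ab and c⁻¹b⁻¹cbc also satisfy the single lace Coxeter relation with x. -/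
/-- The single lace Coxeter relation is preserved under conjugation. -/
lemma lace_conj' {G : Type*} [Group G] {g x : G} (p : G) (h : g * x * g = x * g * x) :
    (p * g * p⁻¹) * (p * x * p⁻¹) * (p * g * p⁻¹)
      = (p * x * p⁻¹) * (p * g * p⁻¹) * (p * x * p⁻¹) := by
  calc (p * g * p⁻¹) * (p * x * p⁻¹) * (p * g * p⁻¹) = p * (g * x * g) * p⁻¹ := by group
    _ = p * (x * g * x) * p⁻¹ := by rw [h]
    _ = (p * x * p⁻¹) * (p * g * p⁻¹) * (p * x * p⁻¹) := by group

/-- Transport the single lace relation along equalities of the two elements. -/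
lemma lace_congr' {G : Type*} [Group G] {u v u' v' : G} (hu : u = u') (hv : v = v')
    (h : u * v * u = v * u * v) : u' * v' * u' = v' * u' * v' := by
  rw [← hu, ← hv]; exact h

/-- From the single lace relation, the two conjugates `g⁻¹xg` and `xgx⁻¹` coincide. -/
lemma lace_d1 {G : Type*} [Group G] {g x : G} (h : g * x * g = x * g * x) :
    g⁻¹ * x * g = x * g * x⁻¹ := by
  calc g⁻¹ * x * g = g⁻¹ * (x * g * x) * x⁻¹ := by group
    _ = g⁻¹ * (g * x * g) * x⁻¹ := by rw [← h]
    _ = x * g * x⁻¹ := by group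

/-- From the single lace relation, the two conjugates `x⁻¹gx` and `gxg⁻¹` coincide. -/
lemma lace_d2 {G : Type*} [Group G] {g x : G} (h : g * x * g = x * g * x) :
    x⁻¹ * g * x = g * x * g⁻¹ := by
  calc x⁻¹ * g * x = x⁻¹ * (g * x * g) * g⁻¹ := by group
    _ = x⁻¹ * (x * g * x) * g⁻¹ := by rw [h]
    _ = g * x * g⁻¹ := by group

/-- If each of `a`, `b`, `c`, `aba⁻¹` and `c⁻¹bc` satisfies the single lace
Coxeter relation with `x`, then so do `b⁻¹ab` and `c⁻¹b⁻¹cbc`. -/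
theorem single_lace_conjugates {G : Type*} [Group G] (a b c x : G)
    (ha : a * x * a = x * a * x)
    (hb : b * x * b = x * b * x)
    (hc : c * x * c = x * c * x)
    (haba : (a * b * a⁻¹) * x * (a * b * a⁻¹) = x * (a * b * a⁻¹) * x)
    (hcbc : (c⁻¹ * b * c) * x * (c⁻¹ * b * c) = x * (c⁻¹ * b * c) * x) :
    (b⁻¹ * a * b) * x * (b⁻¹ * a * b) = x * (b⁻¹ * a * b) * x ∧
      (c⁻¹ * b⁻¹ * c * b * c) * x * (c⁻¹ * b⁻¹ * c * b * c) =
        x * (c⁻¹ * b⁻¹ * c * b * c) * x := by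
  constructor
  · -- Claim 1
    -- conjugate haba by a⁻¹ :  braid(b, a⁻¹xa)
    have h1 : b * (a⁻¹ * x * a) * b = (a⁻¹ * x * a) * b * (a⁻¹ * x * a) :=
      lace_congr' (by group) (by group) (lace_conj' a⁻¹ haba)
    -- a⁻¹xa = xax⁻¹
    rw [lace_d1 ha] at h1
    -- conjugate by x⁻¹ : braid(x⁻¹bx, a)
    have h3 : (x⁻¹ * b * x) * a * (x⁻¹ * b * x) = a * (x⁻¹ * b * x) * a :=
      lace_congr' (by group) (by group) (lace_conj' x⁻¹ h1)
    -- x⁻¹bx = bxb⁻¹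
    rw [lace_d2 hb] at h3
    -- conjugate by b⁻¹ : braid(x, b⁻¹ab)
    have h5 : x * (b⁻¹ * a * b) * x = (b⁻¹ * a * b) * x * (b⁻¹ * a * b) :=
      lace_congr' (by group) (by group) (lace_conj' b⁻¹ h3)
    exact h5.symm
  · -- Claim 2
    -- conjugate hcbc by c : braid(b, cxc⁻¹)
    have k1 : b * (c * x * c⁻¹) * b = (c * x * c⁻¹) * b * (c * x * c⁻¹) :=
      lace_congr' (by group) (by group) (lace_conj' c hcbc)
    -- cxc⁻¹ = x⁻¹cx
    rw [← lace_d2 hc] at k1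
    -- conjugate by x : braid(xbx⁻¹, c)
    have k3 : (x * b * x⁻¹) * c * (x * b * x⁻¹) = c * (x * b * x⁻¹) * c :=
      lace_congr' (by group) (by group) (lace_conj' x k1)
    -- xbx⁻¹ = b⁻¹xb
    rw [← lace_d1 hb] at k3
    -- conjugate by b : braid(x, bcb⁻¹), i.e. bcb⁻¹ braids with x
    have k5 : x * (b * c * b⁻¹) * x = (b * c * b⁻¹) * x * (b * c * b⁻¹) :=
      lace_congr' (by group) (by group) (lace_conj' b k3)
    have hS5 : (b * c * b⁻¹) * x * (b * c * b⁻¹) = x * (b * c * b⁻¹) * x := k5.symm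
    -- braid(b,x) conjugated by x : braid(xbx⁻¹, x)
    have m1 : (x * b * x⁻¹) * x * (x * b * x⁻¹) = x * (x * b * x⁻¹) * x :=
      lace_congr' (by group) (by group) (lace_conj' x hb)
    -- xbx⁻¹ = b⁻¹xb
    rw [← lace_d1 hb] at m1
    -- conjugate by c⁻¹ : braid(c⁻¹b⁻¹xbc, c⁻¹xc)
    have m3 : (c⁻¹ * b⁻¹ * x * b * c) * (c⁻¹ * x * c) * (c⁻¹ * b⁻¹ * x * b * c)
        = (c⁻¹ * x * c) * (c⁻¹ * b⁻¹ * x * b * c) * (c⁻¹ * x * c) :=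
      lace_congr' (by group) (by group) (lace_conj' c⁻¹ m1)
    -- rewrite the two components
    have eq1 : c⁻¹ * b⁻¹ * x * b * c = b⁻¹ * (x * (b * c * b⁻¹) * x⁻¹) * b := by
      calc c⁻¹ * b⁻¹ * x * b * c
          = b⁻¹ * ((b * c * b⁻¹)⁻¹ * x * (b * c * b⁻¹)) * b := by group
        _ = b⁻¹ * (x * (b * c * b⁻¹) * x⁻¹) * b := by rw [lace_d1 hS5]
    have m4 : (b⁻¹ * (x * (b * c * b⁻¹) * x⁻¹) * b) * (x * c * x⁻¹)
          * (b⁻¹ * (x * (b * c * b⁻¹) * x⁻¹) * b)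
        = (x * c * x⁻¹) * (b⁻¹ * (x * (b * c * b⁻¹) * x⁻¹) * b) * (x * c * x⁻¹) :=
      lace_congr' eq1 (lace_d1 hc) m3
    -- conjugate by x⁻¹, simplifying the left component using hb, hc
    have hu : x⁻¹ * (b⁻¹ * (x * (b * c * b⁻¹) * x⁻¹) * b) * x⁻¹⁻¹
        = b * (c * x * c⁻¹) * b⁻¹ := by
      calc x⁻¹ * (b⁻¹ * (x * (b * c * b⁻¹) * x⁻¹) * b) * x⁻¹⁻¹
          = (x⁻¹ * b * x)⁻¹ * (b * c * b⁻¹) * (x⁻¹ * b * x) := by group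
        _ = (b * x * b⁻¹)⁻¹ * (b * c * b⁻¹) * (b * x * b⁻¹) := by rw [lace_d2 hb]
        _ = b * (x⁻¹ * c * x) * b⁻¹ := by group
        _ = b * (c * x * c⁻¹) * b⁻¹ := by rw [lace_d2 hc]
    have m6 : (b * (c * x * c⁻¹) * b⁻¹) * c * (b * (c * x * c⁻¹) * b⁻¹)
        = c * (b * (c * x * c⁻¹) * b⁻¹) * c :=
      lace_congr' hu (show x⁻¹ * (x * c * x⁻¹) * x⁻¹⁻¹ = c by group) (lace_conj' x⁻¹ m4)
    -- finally conjugate by (bc)⁻¹ = c⁻¹b⁻¹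
    have m7 : x * (c⁻¹ * b⁻¹ * c * b * c) * x
        = (c⁻¹ * b⁻¹ * c * b * c) * x * (c⁻¹ * b⁻¹ * c * b * c) :=
      lace_congr' (by group) (by group) (lace_conj' (c⁻¹ * b⁻¹) m6)
    exact m7.symm
end

section
/- Let G be a group and let a₁, a₂, a₃, t ∈ G be such that: (1) for all 1 ≤ i < j ≤ 3, aᵢ commutes with t⁻¹aⱼt (i.e. aᵢ t⁻¹ aⱼ t = t⁻¹ aⱼ t aᵢ), and (2) each aᵢ satisfies the double lace Coxeter relation with t, i.e. t aᵢ t aᵢ = aᵢ t aᵢ t. Then for every 1 ≤ i < j ≤ 3, both aᵢ and aⱼ commute with the element t aᵢ aⱼ t. -/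
private lemma aux_pair {G : Type*} [Group G] (a b t : G)
    (h : a * (t⁻¹ * b * t) = (t⁻¹ * b * t) * a)
    (hda : t * a * t * a = a * t * a * t)
    (hdb : t * b * t * b = b * t * b * t) :
    a * (t * a * b * t) = (t * a * b * t) * a ∧
      b * (t * a * b * t) = (t * a * b * t) * b := by
  constructor
  · calc a * (t * a * b * t) = (a * t * a * t) * (t⁻¹ * b * t) := by group
    _ = (t * a * t * a) * (t⁻¹ * b * t) := by rw [← hda]
    _ = (t * a * t) * (a * (t⁻¹ * b * t)) := by group
    _ = (t * a * t) * ((t⁻¹ * b * t) * a) := by rw [h]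
    _ = (t * a * b * t) * a := by group
  · calc b * (t * a * b * t) = t * ((t⁻¹ * b * t) * a) * (b * t) := by group
    _ = t * (a * (t⁻¹ * b * t)) * (b * t) := by rw [h]
    _ = t * a * t⁻¹ * (b * t * b * t) := by group
    _ = t * a * t⁻¹ * (t * b * t * b) := by rw [← hdb]
    _ = (t * a * b * t) * b := by group

/-- Under the defining relations of the triple group in the double lace case
(`aᵢ` commutes with `t⁻¹aⱼt` for `i < j`, and each `aᵢ` satisfies the double
lace Coxeter relation with `t`), for every `1 ≤ i < j ≤ 3` both `aᵢ` and `aⱼ`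
commute with `t aᵢ aⱼ t`. -/
theorem commute_with_taiajt {G : Type*} [Group G] (a₁ a₂ a₃ t : G)
    (h12 : a₁ * (t⁻¹ * a₂ * t) = (t⁻¹ * a₂ * t) * a₁)
    (h13 : a₁ * (t⁻¹ * a₃ * t) = (t⁻¹ * a₃ * t) * a₁)
    (h23 : a₂ * (t⁻¹ * a₃ * t) = (t⁻¹ * a₃ * t) * a₂)
    (hd1 : t * a₁ * t * a₁ = a₁ * t * a₁ * t)
    (hd2 : t * a₂ * t * a₂ = a₂ * t * a₂ * t)
    (hd3 : t * a₃ * t * a₃ = a₃ * t * a₃ * t) :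
    (a₁ * (t * a₁ * a₂ * t) = (t * a₁ * a₂ * t) * a₁ ∧
      a₂ * (t * a₁ * a₂ * t) = (t * a₁ * a₂ * t) * a₂) ∧
    (a₁ * (t * a₁ * a₃ * t) = (t * a₁ * a₃ * t) * a₁ ∧
      a₃ * (t * a₁ * a₃ * t) = (t * a₁ * a₃ * t) * a₃) ∧
    (a₂ * (t * a₂ * a₃ * t) = (t * a₂ * a₃ * t) * a₂ ∧
      a₃ * (t * a₂ * a₃ * t) = (t * a₂ * a₃ * t) * a₃) :=
  ⟨aux_pair a₁ a₂ t h12 hd1 hd2, aux_pair a₁ a₃ t h13 hd1 hd3,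
    aux_pair a₂ a₃ t h23 hd2 hd3⟩
end

section
/- Let G be a group and let a₁, a₂, a₃, t ∈ G be such that: (1) for all 1 ≤ i < j ≤ 3, aᵢ commutes with t⁻¹aⱼt, and (2) each aᵢ satisfies the double lace Coxeter relation with t, i.e. t aᵢ t aᵢ = aᵢ t aᵢ t. Then the elements a₂⁻¹a₁a₂ and a₃⁻¹a₂a₃ also satisfy the double lace Coxeter relation with t: for g = a₂⁻¹a₁a₂ and for g = a₃⁻¹a₂a₃ one has t g t g = g t g t. -/
private lemma double_lace_key {G : Type*} [Group G] (a b t : G)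
    (h : a * (t⁻¹ * b * t) = (t⁻¹ * b * t) * a)
    (hda : t * a * t * a = a * t * a * t)
    (hdb : t * b * t * b = b * t * b * t) :
    t * (b⁻¹ * a * b) * t * (b⁻¹ * a * b) = (b⁻¹ * a * b) * t * (b⁻¹ * a * b) * t := by
  have R1 : ∀ x : G, b*(t*(b*(t*x))) = t*(b*(t*(b*x))) := by
    intro x
    simp only [← mul_assoc]
    rw [← hdb]
  have R2 : ∀ x : G, t*(a*(t*(a*x))) = a*(t*(a*(t*x))) := by
    intro x
    simp only [← mul_assoc]
    rw [hda]
  have h' := h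
  simp only [← mul_assoc] at h'
  have R3 : ∀ x : G, a*(t⁻¹*(b*(t*x))) = t⁻¹*(b*(t*(a*x))) := by
    intro x
    simp only [← mul_assoc]
    rw [h']
  have R4 : ∀ x : G, b*(t*(a*x)) = t*(a*(t⁻¹*(b*(t*x)))) := by
    intro x
    rw [R3 x, mul_inv_cancel_left]
  have R5 : ∀ x : G, a*(t⁻¹*(b⁻¹*(t*x))) = t⁻¹*(b⁻¹*(t*(a*x))) := by
    intro x
    have e := R3 (t⁻¹*(b⁻¹*(t*x)))
    simp only [mul_inv_cancel_left, inv_mul_cancel_left] at e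
    rw [e]
    simp only [mul_inv_cancel_left, inv_mul_cancel_left]
  have R6 : ∀ x : G, b*(t*(b⁻¹*x)) = t⁻¹*(b⁻¹*(t*(b*(t*x)))) := by
    intro x
    have e := R1 (b⁻¹*x)
    simp only [mul_inv_cancel_left, inv_mul_cancel_left] at e
    rw [← e]
    simp only [mul_inv_cancel_left, inv_mul_cancel_left]
  have R7 : ∀ x : G, t*(b⁻¹*(t⁻¹*(b⁻¹*x))) = b⁻¹*(t⁻¹*(b⁻¹*(t*x))) := by
    intro x
    have e := R1 (b⁻¹*(t⁻¹*(b⁻¹*x)))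
    simp only [mul_inv_cancel_left, inv_mul_cancel_left] at e
    rw [← e]
    simp only [mul_inv_cancel_left, inv_mul_cancel_left]
  have L : ∀ x : G, t*(b⁻¹*(a*(b*(t*(b⁻¹*(a*(b*x))))))) =
      b⁻¹*(t⁻¹*(b⁻¹*(t*(a*(t*(a*(b*(t*(b*x))))))))) := by
    intro x
    calc t*(b⁻¹*(a*(b*(t*(b⁻¹*(a*(b*x)))))))
        = t*(b⁻¹*(a*(t⁻¹*(b⁻¹*(t*(b*(t*(a*(b*x))))))))) := by rw [R6]
      _ = t*(b⁻¹*(t⁻¹*(b⁻¹*(t*(a*(b*(t*(a*(b*x))))))))) := by rw [R5]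
      _ = t*(b⁻¹*(t⁻¹*(b⁻¹*(t*(a*(t*(a*(t⁻¹*(b*(t*(b*x))))))))))) := by rw [R4]
      _ = b⁻¹*(t⁻¹*(b⁻¹*(t*(t*(a*(t*(a*(t⁻¹*(b*(t*(b*x))))))))))) := by rw [R7]
      _ = b⁻¹*(t⁻¹*(b⁻¹*(t*(a*(t*(a*(t*(t⁻¹*(b*(t*(b*x))))))))))) := by rw [R2]
      _ = b⁻¹*(t⁻¹*(b⁻¹*(t*(a*(t*(a*(b*(t*(b*x))))))))) := by
            rw [mul_inv_cancel_left]
  have Rr : ∀ x : G, b⁻¹*(a*(b*(t*(b⁻¹*(a*(b*(t*x))))))) =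
      b⁻¹*(t⁻¹*(b⁻¹*(t*(a*(t*(a*(b*(t*(b*x))))))))) := by
    intro x
    calc b⁻¹*(a*(b*(t*(b⁻¹*(a*(b*(t*x)))))))
        = b⁻¹*(a*(t⁻¹*(b⁻¹*(t*(b*(t*(a*(b*(t*x))))))))) := by rw [R6]
      _ = b⁻¹*(t⁻¹*(b⁻¹*(t*(a*(b*(t*(a*(b*(t*x))))))))) := by rw [R5]
      _ = b⁻¹*(t⁻¹*(b⁻¹*(t*(a*(t*(a*(t⁻¹*(b*(t*(b*(t*x))))))))))) := by rw [R4]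
      _ = b⁻¹*(t⁻¹*(b⁻¹*(t*(a*(t*(a*(t⁻¹*(t*(b*(t*(b*x))))))))))) := by rw [R1]
      _ = b⁻¹*(t⁻¹*(b⁻¹*(t*(a*(t*(a*(b*(t*(b*x))))))))) := by
            rw [inv_mul_cancel_left]
  have := (L 1).trans (Rr 1).symm
  simpa only [mul_one, mul_assoc] using this

/-- Under the defining relations of the triple group in the double lace case
(`aᵢ` commutes with `t⁻¹aⱼt` for `i < j`, and each `aᵢ` satisfies the double
lace Coxeter relation with `t`), the elements `a₂⁻¹a₁a₂` and `a₃⁻¹a₂a₃` also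
satisfy the double lace Coxeter relation with `t`. -/
theorem conjugates_double_lace {G : Type*} [Group G] (a₁ a₂ a₃ t : G)
    (h12 : a₁ * (t⁻¹ * a₂ * t) = (t⁻¹ * a₂ * t) * a₁)
    (h13 : a₁ * (t⁻¹ * a₃ * t) = (t⁻¹ * a₃ * t) * a₁)
    (h23 : a₂ * (t⁻¹ * a₃ * t) = (t⁻¹ * a₃ * t) * a₂)
    (hd1 : t * a₁ * t * a₁ = a₁ * t * a₁ * t)
    (hd2 : t * a₂ * t * a₂ = a₂ * t * a₂ * t)
    (hd3 : t * a₃ * t * a₃ = a₃ * t * a₃ * t) :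
    t * (a₂⁻¹ * a₁ * a₂) * t * (a₂⁻¹ * a₁ * a₂) =
        (a₂⁻¹ * a₁ * a₂) * t * (a₂⁻¹ * a₁ * a₂) * t ∧
      t * (a₃⁻¹ * a₂ * a₃) * t * (a₃⁻¹ * a₂ * a₃) =
        (a₃⁻¹ * a₂ * a₃) * t * (a₃⁻¹ * a₂ * a₃) * t := by
  exact ⟨double_lace_key a₁ a₂ t h12 hd1 hd2, double_lace_key a₂ a₃ t h23 hd2 hd3⟩
end

section
/- Let G be a group and let a₁, a₂, a₃, t ∈ G be such that: (1) for all 1 ≤ i < j ≤ 3, aᵢ commutes with t⁻¹aⱼt, and (2) each aᵢ satisfies the double lace Coxeter relation with t, i.e. t aᵢ t aᵢ = aᵢ t aᵢ t. Then the commutation relation p · (t⁻¹ q t) = (t⁻¹ q t) · p holds for each of the following pairs (p, q): (a₂, a₂⁻¹a₁a₂), (a₁, a₃⁻¹a₂a₃), (a₂⁻¹a₁a₂, a₃), and (a₃, a₃⁻¹a₂a₃). -/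
private lemma comm_inv {G : Type*} [Group G] (b c : G) (h : b * c = c * b) :
    b * c⁻¹ = c⁻¹ * b := by
  calc b * c⁻¹ = c⁻¹ * (c * b) * c⁻¹ := by group
    _ = c⁻¹ * (b * c) * c⁻¹ := by rw [h]
    _ = c⁻¹ * b := by group

private lemma comm_conj {G : Type*} [Group G] (b c d : G)
    (h1 : b * c = c * b) (h2 : b * d = d * b) :
    b * (c⁻¹ * d * c) = (c⁻¹ * d * c) * b := by
  have hinv := comm_inv b c h1
  calc b * (c⁻¹ * d * c) = (b * c⁻¹) * d * c := by group
    _ = (c⁻¹ * b) * d * c := by rw [hinv]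
    _ = c⁻¹ * (b * d) * c := by group
    _ = c⁻¹ * (d * b) * c := by rw [h2]
    _ = c⁻¹ * d * (b * c) := by group
    _ = c⁻¹ * d * (c * b) := by rw [h1]
    _ = (c⁻¹ * d * c) * b := by group

private lemma key {G : Type*} [Group G] (a b t : G)
    (hc : b * (t⁻¹ * a * t) = (t⁻¹ * a * t) * b)
    (hd : t * a * t * a = a * t * a * t) :
    a * (t⁻¹ * (a⁻¹ * b * a) * t) = (t⁻¹ * (a⁻¹ * b * a) * t) * a := by
  have h1 : a * (t * a * t⁻¹) = (t⁻¹ * a * t) * a := by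
    calc a * (t * a * t⁻¹) = t⁻¹ * (t * a * t * a) * t⁻¹ := by group
      _ = t⁻¹ * (a * t * a * t) * t⁻¹ := by rw [hd]
      _ = (t⁻¹ * a * t) * a := by group
  have h2 : t * a * t⁻¹ = a⁻¹ * ((t⁻¹ * a * t) * a) := by
    rw [← h1]; group
  calc a * (t⁻¹ * (a⁻¹ * b * a) * t)
      = t⁻¹ * ((t * a * t⁻¹) * a⁻¹ * b * a) * t := by group
    _ = t⁻¹ * ((a⁻¹ * ((t⁻¹ * a * t) * a)) * a⁻¹ * b * a) * t := by rw [h2]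
    _ = t⁻¹ * a⁻¹ * ((t⁻¹ * a * t) * b) * a * t := by group
    _ = t⁻¹ * a⁻¹ * (b * (t⁻¹ * a * t)) * a * t := by rw [← hc]
    _ = t⁻¹ * a⁻¹ * b * t⁻¹ * (a * t * a * t) := by group
    _ = t⁻¹ * a⁻¹ * b * t⁻¹ * (t * a * t * a) := by rw [← hd]
    _ = (t⁻¹ * (a⁻¹ * b * a) * t) * a := by group

/-- Under the defining relations of the triple group in the double lace case
(`aᵢ` commutes with `t⁻¹aⱼt` for `i < j`, and each `aᵢ` satisfies the double
lace Coxeter relation with `t`), the commutation relation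
`p (t⁻¹ q t) = (t⁻¹ q t) p` also holds for the pairs
`(a₂, a₂⁻¹a₁a₂)`, `(a₁, a₃⁻¹a₂a₃)`, `(a₂⁻¹a₁a₂, a₃)` and `(a₃, a₃⁻¹a₂a₃)`. -/
theorem commutation_pairs {G : Type*} [Group G] (a₁ a₂ a₃ t : G)
    (h12 : a₁ * (t⁻¹ * a₂ * t) = (t⁻¹ * a₂ * t) * a₁)
    (h13 : a₁ * (t⁻¹ * a₃ * t) = (t⁻¹ * a₃ * t) * a₁)
    (h23 : a₂ * (t⁻¹ * a₃ * t) = (t⁻¹ * a₃ * t) * a₂)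
    (hd1 : t * a₁ * t * a₁ = a₁ * t * a₁ * t)
    (hd2 : t * a₂ * t * a₂ = a₂ * t * a₂ * t)
    (hd3 : t * a₃ * t * a₃ = a₃ * t * a₃ * t) :
    a₂ * (t⁻¹ * (a₂⁻¹ * a₁ * a₂) * t) = (t⁻¹ * (a₂⁻¹ * a₁ * a₂) * t) * a₂ ∧
    a₁ * (t⁻¹ * (a₃⁻¹ * a₂ * a₃) * t) = (t⁻¹ * (a₃⁻¹ * a₂ * a₃) * t) * a₁ ∧
    (a₂⁻¹ * a₁ * a₂) * (t⁻¹ * a₃ * t) = (t⁻¹ * a₃ * t) * (a₂⁻¹ * a₁ * a₂) ∧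
    a₃ * (t⁻¹ * (a₃⁻¹ * a₂ * a₃) * t) = (t⁻¹ * (a₃⁻¹ * a₂ * a₃) * t) * a₃ := by
  refine ⟨key a₂ a₁ t h12 hd2, ?_, ?_, key a₃ a₂ t h23 hd3⟩
  · have e : t⁻¹ * (a₃⁻¹ * a₂ * a₃) * t
        = (t⁻¹ * a₃ * t)⁻¹ * (t⁻¹ * a₂ * t) * (t⁻¹ * a₃ * t) := by group
    rw [e]
    exact comm_conj a₁ (t⁻¹ * a₃ * t) (t⁻¹ * a₂ * t) h13 h12
  · set c := t⁻¹ * a₃ * t with hc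
    have h2i := comm_inv a₂ c h23
    calc (a₂⁻¹ * a₁ * a₂) * c = a₂⁻¹ * a₁ * (a₂ * c) := by group
      _ = a₂⁻¹ * a₁ * (c * a₂) := by rw [h23]
      _ = a₂⁻¹ * (a₁ * c) * a₂ := by group
      _ = a₂⁻¹ * (c * a₁) * a₂ := by rw [h13]
      _ = (a₂⁻¹ * c) * a₁ * a₂ := by group
      _ = (c * a₂⁻¹) * a₁ * a₂ := by
          rw [(comm_inv c a₂ h23.symm).symm]
      _ = c * (a₂⁻¹ * a₁ * a₂) := by group
end

section
/- Let G be a group and let t₀, t, x, y ∈ G satisfy: x y = y x; x t = t⁻¹ x y; (x y) t₀⁻¹ = t₀ y; and the braid relation t₀ t t₀ = t t₀ t. Then the element T := t₀⁻¹ x satisfies the same single lace braid relation with t: T t T = t T t. -/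
/-- (Case `l₀ = 1`.) If `xy = yx`, `xt = t⁻¹xy`, `(xy)t₀⁻¹ = t₀y` and
`t₀tt₀ = tt₀t`, then `T := t₀⁻¹x` satisfies the single lace braid relation
with `t`: `TtT = tTt`. -/
theorem single_lace_for_t0inv_x {G : Type*} [Group G] (t₀ t x y : G)
    (hxy : x * y = y * x)
    (hxt : x * t = t⁻¹ * x * y)
    (hxyt0 : (x * y) * t₀⁻¹ = t₀ * y)
    (hbraid : t₀ * t * t₀ = t * t₀ * t) :
    (t₀⁻¹ * x) * t * (t₀⁻¹ * x) = t * (t₀⁻¹ * x) * t := by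
  have hinv : t₀⁻¹ * t⁻¹ * t₀⁻¹ = t⁻¹ * t₀⁻¹ * t⁻¹ := by
    have := congrArg (·⁻¹) hbraid
    simpa [mul_assoc] using this
  have key : t₀⁻¹ * t⁻¹ * t₀ = t * t₀⁻¹ * t⁻¹ := by
    have := congrArg (fun g => t * g * t₀) hinv
    simpa [mul_assoc] using this.symm
  calc (t₀⁻¹ * x) * t * (t₀⁻¹ * x)
      = t₀⁻¹ * (x * t) * t₀⁻¹ * x := by group
    _ = t₀⁻¹ * (t⁻¹ * x * y) * t₀⁻¹ * x := by rw [hxt]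
    _ = t₀⁻¹ * t⁻¹ * ((x * y) * t₀⁻¹) * x := by group
    _ = t₀⁻¹ * t⁻¹ * (t₀ * y) * x := by rw [hxyt0]
    _ = (t₀⁻¹ * t⁻¹ * t₀) * (y * x) := by group
    _ = (t * t₀⁻¹ * t⁻¹) * (x * y) := by rw [key, hxy]
    _ = t * t₀⁻¹ * (t⁻¹ * x * y) := by group
    _ = t * t₀⁻¹ * (x * t) := by rw [hxt]
    _ = t * (t₀⁻¹ * x) * t := by group
end

section
/- Let G be a group and let t₀, t, x, y ∈ G satisfy: x y = y x; x t = t⁻¹ x y; x y commutes with t₀ (i.e. (xy) t₀⁻¹ = t₀⁻¹ (xy)); x² y commutes with t (i.e. (x²y) t = t (x²y)); and the double lace braid relation t₀ t t₀ t = t t₀ t t₀. Then the element T := t₀⁻¹ x satisfies the same double lace braid relation with t: T t T t = t T t T. -/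
/-- (Case `l₀ = 2`.) If `xy = yx`, `xt = t⁻¹xy`, `xy` commutes with `t₀`,
`x²y` commutes with `t`, and `t₀tt₀t = tt₀tt₀`, then `T := t₀⁻¹x` satisfies
the double lace braid relation with `t`: `TtTt = tTtT`. -/
theorem double_lace_for_t0inv_x {G : Type*} [Group G] (t₀ t x y : G)
    (hxy : x * y = y * x)
    (hxt : x * t = t⁻¹ * x * y)
    (hxyt0 : (x * y) * t₀⁻¹ = t₀⁻¹ * (x * y))
    (hx2yt : (x ^ 2 * y) * t = t * (x ^ 2 * y))
    (hbraid : t₀ * t * t₀ * t = t * t₀ * t * t₀) :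
    (t₀⁻¹ * x) * t * (t₀⁻¹ * x) * t = t * (t₀⁻¹ * x) * t * (t₀⁻¹ * x) := by
  have hxyx : x * y * x = x ^ 2 * y := by
    calc x * y * x = x * (y * x) := by group
      _ = x * (x * y) := by rw [← hxy]
      _ = x ^ 2 * y := by rw [pow_two, mul_assoc]
  have hinv : t₀⁻¹ * t⁻¹ * t₀⁻¹ * t⁻¹ = t⁻¹ * t₀⁻¹ * t⁻¹ * t₀⁻¹ := by
    have h := congrArg (·⁻¹) hbraid
    simp only [mul_inv_rev] at h
    calc t₀⁻¹ * t⁻¹ * t₀⁻¹ * t⁻¹ = t₀⁻¹ * (t⁻¹ * (t₀⁻¹ * t⁻¹)) := by group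
      _ = t⁻¹ * (t₀⁻¹ * (t⁻¹ * t₀⁻¹)) := h.symm
      _ = t⁻¹ * t₀⁻¹ * t⁻¹ * t₀⁻¹ := by group
  have h1 : t₀⁻¹ * t⁻¹ * t₀⁻¹ * t = t * (t₀⁻¹ * t⁻¹ * t₀⁻¹) := by
    calc t₀⁻¹ * t⁻¹ * t₀⁻¹ * t = t * (t⁻¹ * t₀⁻¹ * t⁻¹ * t₀⁻¹) * t := by group
      _ = t * (t₀⁻¹ * t⁻¹ * t₀⁻¹ * t⁻¹) * t := by rw [hinv]
      _ = t * (t₀⁻¹ * t⁻¹ * t₀⁻¹) := by group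
  calc (t₀⁻¹ * x) * t * (t₀⁻¹ * x) * t
      = t₀⁻¹ * (x * t) * t₀⁻¹ * (x * t) := by group
    _ = t₀⁻¹ * (t⁻¹ * x * y) * t₀⁻¹ * (x * t) := by rw [hxt]
    _ = t₀⁻¹ * t⁻¹ * ((x * y) * t₀⁻¹) * (x * t) := by group
    _ = t₀⁻¹ * t⁻¹ * (t₀⁻¹ * (x * y)) * (x * t) := by rw [hxyt0]
    _ = t₀⁻¹ * t⁻¹ * t₀⁻¹ * ((x * y * x) * t) := by group
    _ = t₀⁻¹ * t⁻¹ * t₀⁻¹ * ((x ^ 2 * y) * t) := by rw [hxyx]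
    _ = t₀⁻¹ * t⁻¹ * t₀⁻¹ * (t * (x ^ 2 * y)) := by rw [hx2yt]
    _ = (t₀⁻¹ * t⁻¹ * t₀⁻¹ * t) * (x ^ 2 * y) := by group
    _ = (t * (t₀⁻¹ * t⁻¹ * t₀⁻¹)) * (x ^ 2 * y) := by rw [h1]
    _ = t * t₀⁻¹ * t⁻¹ * t₀⁻¹ * (x * y * x) := by rw [hxyx]; group
    _ = t * t₀⁻¹ * t⁻¹ * ((x * y) * t₀⁻¹) * x := by rw [hxyt0]; group
    _ = t * t₀⁻¹ * (t⁻¹ * x * y) * t₀⁻¹ * x := by group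
    _ = t * t₀⁻¹ * (x * t) * t₀⁻¹ * x := by rw [hxt]
    _ = t * (t₀⁻¹ * x) * t * (t₀⁻¹ * x) := by group
end

section
/- Let G be a group and let t₀, t, x, y ∈ G satisfy: x y = y x; x t = t⁻¹ x y; x y commutes with t₀; and the double lace braid relation t₀ t t₀ t = t t₀ t t₀. Then t₀ commutes with the element t⁻¹ t₀⁻¹ x t, i.e. t₀ · (t⁻¹ t₀⁻¹ x t) = (t⁻¹ t₀⁻¹ x t) · t₀. -/
/-- (Double lace case.) If `xy = yx`, `xt = t⁻¹xy`, `xy` commutes with `t₀`,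
and `t₀tt₀t = tt₀tt₀`, then `t₀` commutes with `t⁻¹t₀⁻¹xt`. -/
theorem t0_commutes_with_conj {G : Type*} [Group G] (t₀ t x y : G)
    (hxy : x * y = y * x)
    (hxt : x * t = t⁻¹ * x * y)
    (hxyt0 : (x * y) * t₀ = t₀ * (x * y))
    (hbraid : t₀ * t * t₀ * t = t * t₀ * t * t₀) :
    t₀ * (t⁻¹ * t₀⁻¹ * x * t) = (t⁻¹ * t₀⁻¹ * x * t) * t₀ := by
  have hinv : t⁻¹ * t₀⁻¹ * t⁻¹ * t₀⁻¹ = t₀⁻¹ * t⁻¹ * t₀⁻¹ * t⁻¹ := by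
    have := congrArg Inv.inv hbraid
    simpa [mul_assoc] using this
  have key : t₀ * (t⁻¹ * t₀⁻¹ * t⁻¹) = (t⁻¹ * t₀⁻¹ * t⁻¹) * t₀ := by
    have h := congrArg (fun g => t₀ * g * t₀) hinv
    simpa [mul_assoc] using h
  calc t₀ * (t⁻¹ * t₀⁻¹ * x * t)
      = t₀ * (t⁻¹ * t₀⁻¹ * (t⁻¹ * x * y)) := by rw [← hxt]; simp [mul_assoc]
    _ = t₀ * (t⁻¹ * t₀⁻¹ * t⁻¹) * (x * y) := by simp [mul_assoc]
    _ = (t⁻¹ * t₀⁻¹ * t⁻¹) * (t₀ * (x * y)) := by rw [← mul_assoc, key]; simp [mul_assoc]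
    _ = (t⁻¹ * t₀⁻¹ * t⁻¹) * ((x * y) * t₀) := by rw [hxyt0]
    _ = (t⁻¹ * t₀⁻¹ * (x * t)) * t₀ := by rw [hxt]; simp [mul_assoc]
    _ = (t⁻¹ * t₀⁻¹ * x * t) * t₀ := by simp [mul_assoc]
end

section
/- Let G be a group and let t₀, t_β, x, z ∈ G satisfy: t₀ t_β = t_β t₀; t_β z = z t_β; x z = z x; and t₀ x t₀ = x z. Define x_β := t_β x t_β x⁻¹. Then t₀ commutes with x_β: t₀ x_β = x_β t₀. -/
/-- (Reduction of Cherednik's presentation, case `l₀ = 1`.) If `t₀` commutes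
with `t_β`, `t_β` commutes with `z`, `x` commutes with `z`, and
`t₀ x t₀ = x z`, then `t₀` commutes with `x_β := t_β x t_β x⁻¹`. -/
theorem t0_commutes_with_xbeta {G : Type*} [Group G] (t₀ tβ x z : G)
    (h1 : t₀ * tβ = tβ * t₀)
    (h2 : tβ * z = z * tβ)
    (h3 : x * z = z * x)
    (h4 : t₀ * x * t₀ = x * z) :
    t₀ * (tβ * x * tβ * x⁻¹) = (tβ * x * tβ * x⁻¹) * t₀ := by
  have h5 : t₀ * x = x * z * t₀⁻¹ := by
    have := h4; group at this ⊢
    rw [← this]; group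
  have h6 : t₀⁻¹ * x⁻¹ = z⁻¹ * x⁻¹ * t₀ := by
    have h : t₀⁻¹ * x⁻¹ * t₀⁻¹ = z⁻¹ * x⁻¹ := by
      have : (t₀ * x * t₀)⁻¹ = (x * z)⁻¹ := by rw [h4]
      simpa [mul_inv_rev, mul_assoc] using this
    rw [← h]; group
  calc t₀ * (tβ * x * tβ * x⁻¹)
      = tβ * (t₀ * x) * tβ * x⁻¹ := by rw [← mul_assoc, ← mul_assoc, ← mul_assoc, h1]; group
    _ = tβ * (x * z * t₀⁻¹) * tβ * x⁻¹ := by rw [h5]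
    _ = tβ * x * z * (t₀⁻¹ * tβ) * x⁻¹ := by group
    _ = tβ * x * z * (tβ * t₀⁻¹) * x⁻¹ := by
        have : t₀⁻¹ * tβ = tβ * t₀⁻¹ := by
          exact ((show Commute t₀ tβ from h1).inv_left).eq
        rw [this]
    _ = tβ * x * (z * tβ) * (t₀⁻¹ * x⁻¹) := by group
    _ = tβ * x * (tβ * z) * (z⁻¹ * x⁻¹ * t₀) := by rw [h2, h6]
    _ = tβ * x * tβ * x⁻¹ * t₀ := by group
end

section
/- Let G be a group and let a, b, c, t, s ∈ G be such that the element z := a b c s is central in G, a commutes with t⁻¹ b t, a commutes with t a t, and a commutes with t s⁻¹ t. Then a commutes with t⁻¹ c t, i.e. a · (t⁻¹ c t) = (t⁻¹ c t) · a. -/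
/-- (Case `l₀ = 2`, redundancy of the relations (ellbraid).) If `z := a b c s`
is central, `a` commutes with `t⁻¹ b t`, with `t a t` and with `t s⁻¹ t`, then
`a` commutes with `t⁻¹ c t`. -/
theorem a_commutes_with_tinv_c_t {G : Type*} [Group G] (a b c t s : G)
    (hz : ∀ g : G, g * (a * b * c * s) = (a * b * c * s) * g)
    (hb : a * (t⁻¹ * b * t) = (t⁻¹ * b * t) * a)
    (ha : a * (t * a * t) = (t * a * t) * a)
    (hs : a * (t * s⁻¹ * t) = (t * s⁻¹ * t) * a) :
    a * (t⁻¹ * c * t) = (t⁻¹ * c * t) * a := by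
  have hbC : Commute a (t⁻¹ * b * t) := hb
  have haC : Commute a (t * a * t) := ha
  have hsC : Commute a (t * s⁻¹ * t) := hs
  have hzC : Commute a (a * b * c * s) := hz a
  have key : Commute a
      ((a * b * c * s) * ((t⁻¹ * b * t)⁻¹ * (t * a * t)⁻¹ * (t * s⁻¹ * t))) :=
    hzC.mul_right ((hbC.inv_right.mul_right haC.inv_right).mul_right hsC)
  have h := hz (t⁻¹ * b⁻¹ * a⁻¹)
  have heq : t⁻¹ * c * t
      = (a * b * c * s) * ((t⁻¹ * b * t)⁻¹ * (t * a * t)⁻¹ * (t * s⁻¹ * t)) := by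
    symm
    calc (a * b * c * s) * ((t⁻¹ * b * t)⁻¹ * (t * a * t)⁻¹ * (t * s⁻¹ * t))
        = ((a * b * c * s) * (t⁻¹ * b⁻¹ * a⁻¹)) * (s⁻¹ * t) := by group
      _ = ((t⁻¹ * b⁻¹ * a⁻¹) * (a * b * c * s)) * (s⁻¹ * t) := by rw [h]
      _ = t⁻¹ * c * t := by group
  rw [heq]
  exact key
end

section
/- Let G be a group and let a, b, c, t, s ∈ G be such that a t a = t a t, b t b = t b t, and the element z := a b c s is central in G. Then b = a⁻¹ t⁻¹ a t · s⁻¹ c⁻¹ t c s · a t⁻¹. -/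
/-- (Case `l₀ = 1`.) If `a t a = t a t`, `b t b = t b t` and `z := a b c s` is
central, then `b` can be expressed in terms of the other generators:
`b = a⁻¹ t⁻¹ a t · s⁻¹ c⁻¹ t c s · a t⁻¹`. -/
theorem b_expressible {G : Type*} [Group G] (a b c t s : G)
    (hat : a * t * a = t * a * t)
    (hbt : b * t * b = t * b * t)
    (hz : ∀ g : G, g * (a * b * c * s) = (a * b * c * s) * g) :
    b = a⁻¹ * t⁻¹ * a * t * s⁻¹ * c⁻¹ * t * c * s * a * t⁻¹ := by
  have key : c * s * a * b = a * b * c * s := by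
    have h : (a * b) * (c * s * a * b) = (a * b) * (a * b * c * s) := by
      calc (a * b) * (c * s * a * b) = (a * b * c * s) * (a * b) := by group
        _ = (a * b) * (a * b * c * s) := (hz (a * b)).symm
    exact mul_left_cancel h
  have hc : t * (c * s * a * b) = (c * s * a * b) * t := by
    rw [key]; exact hz t
  have h1 : s⁻¹ * c⁻¹ * t * c * s = a * b * t * b⁻¹ * a⁻¹ := by
    calc s⁻¹ * c⁻¹ * t * c * s
        = s⁻¹ * c⁻¹ * (t * (c * s * a * b)) * b⁻¹ * a⁻¹ := by group
      _ = s⁻¹ * c⁻¹ * ((c * s * a * b) * t) * b⁻¹ * a⁻¹ := by rw [hc]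
      _ = a * b * t * b⁻¹ * a⁻¹ := by group
  calc b = (b * t * b) * b⁻¹ * t⁻¹ := by group
    _ = (t * b * t) * b⁻¹ * t⁻¹ := by rw [hbt]
    _ = a⁻¹ * t⁻¹ * (t * a * t) * b * t * b⁻¹ * t⁻¹ := by group
    _ = a⁻¹ * t⁻¹ * (a * t * a) * b * t * b⁻¹ * t⁻¹ := by rw [hat]
    _ = a⁻¹ * t⁻¹ * a * t * (a * b * t * b⁻¹ * a⁻¹) * (a * t⁻¹) := by group
    _ = a⁻¹ * t⁻¹ * a * t * (s⁻¹ * c⁻¹ * t * c * s) * (a * t⁻¹) := by rw [h1]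
    _ = a⁻¹ * t⁻¹ * a * t * s⁻¹ * c⁻¹ * t * c * s * a * t⁻¹ := by group
end
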